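/- Double robustness identity (outcome-model side): if m1, m0 are arbitrary bounded measurable functions of X, but the true e1(X) and π(X) are used, then E[ (G/(1−q))·((1−π(X))/π(X))·( A(Y−m1(X))/e1(X) − (1−A)(Y−m0(X))/(1−e1(X)) ) + ((1−G)/(1−q))·(m1(X) − m0(X)) ] = τ, under the identifying assumptions. -/

import Mathlib

/-!
Condition on σ(X). Truncation extends the unconfoundedness and transportability hypotheses, stated
for bounded functions of (Y0, Y1), to Y0 and Y1 themselves. Then
E[A G (Y1 - m1(X)) | X] = e1 π (E[Y1 | X] - m1(X)), so the weight (1 - π) / (π e1) turns the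
treated residual term into (1 - π) (E[Y1 | X] - m1(X)), while the outcome term (1 - G) m1(X) has
conditional mean (1 - π) m1(X): the arbitrary m1 cancels, and what remains, (1 - π) E[Y1 | X], is
E[(1 - G) Y1 | X]. The control arm is the same computation with A, e1 replaced by 1 - A, 1 - e1.
-/

open MeasureTheory ProbabilityTheory

def mX {Ω : Type*} (X : Ω → ℝ) : MeasurableSpace Ω :=
  MeasurableSpace.comap X inferInstance

open Filter Topology

theorem tendsto_truncation_natCast {α : Type*} (g : α → ℝ) (y : α) :
    Tendsto (fun n : ℕ => truncation g n y) atTop (𝓝 (g y)) := by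
  refine tendsto_const_nhds.congr' ?_
  filter_upwards [tendsto_natCast_atTop_atTop.eventually_gt_atTop |g y|] with n hn
  exact (truncation_eq_self hn).symm

section

variable {Ω : Type*} {m m₀ : MeasurableSpace Ω} {μ : Measure Ω}

theorem condExp_ae_eq_mul_condExp_of_tendsto [IsFiniteMeasure μ] (hm : m ≤ m₀)
    {F F' : ℕ → Ω → ℝ} {f f' c b : Ω → ℝ} {C : ℝ}
    (hc : StronglyMeasurable[m] c) (hcC : ∀ᵐ ω ∂μ, ‖c ω‖ ≤ C)
    (hF : ∀ n, AEStronglyMeasurable (F n) μ) (hF' : ∀ n, AEStronglyMeasurable (F' n) μ)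
    (hb : Integrable b μ) (hFb : ∀ n, ∀ᵐ ω ∂μ, ‖F n ω‖ ≤ b ω)
    (hF'b : ∀ n, ∀ᵐ ω ∂μ, ‖F' n ω‖ ≤ b ω)
    (hFf : ∀ᵐ ω ∂μ, Tendsto (F · ω) atTop (𝓝 (f ω)))
    (hF'f' : ∀ᵐ ω ∂μ, Tendsto (F' · ω) atTop (𝓝 (f' ω)))
    (h : ∀ n, μ[F n | m] =ᵐ[μ] c * μ[F' n | m]) :
    μ[f | m] =ᵐ[μ] c * μ[f' | m] := by
  have hFi n : Integrable (F n) μ := hb.mono' (hF n) (hFb n)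
  have hF'i n : Integrable (F' n) μ := hb.mono' (hF' n) (hF'b n)
  have hf'i : Integrable f' μ := by
    refine hb.mono' (aestronglyMeasurable_of_tendsto_ae _ hF' hF'f') ?_
    filter_upwards [hF'f', ae_all_iff.2 hF'b] with ω hω hωb
    exact le_of_tendsto' hω.norm hωb
  have hpull {g : Ω → ℝ} (hg : Integrable g μ) : μ[c * g | m] =ᵐ[μ] c * μ[g | m] :=
    condExp_stronglyMeasurable_mul_of_bound hm hc hg C hcC
  have hcF'b n : ∀ᵐ ω ∂μ, ‖(c * F' n) ω‖ ≤ |C| * b ω := by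
    filter_upwards [hcC, hF'b n] with ω hωc hωb
    rw [Pi.mul_apply, norm_mul]
    exact mul_le_mul (hωc.trans (le_abs_self C)) hωb (norm_nonneg _) (abs_nonneg C)
  have hlim : μ[f | m] =ᵐ[μ] μ[c * f' | m] :=
    tendsto_condExp_unique F (fun n => c * F' n) f (c * f') hFi
      (fun n => (hF'i n).bdd_mul (hc.mono hm).aestronglyMeasurable hcC) hFf
      (hF'f'.mono fun ω hω => hω.const_mul (c ω)) b hb _ (hb.const_mul |C|) hFb hcF'b
      fun n => (h n).trans (hpull (hF'i n)).symm
  exact hlim.trans (hpull hf'i)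

theorem condExp_mul_comp_ae_eq_of_forall_bounded [IsFiniteMeasure μ] (hm : m ≤ m₀)
    {β : Type*} [MeasurableSpace β] {V : Ω → β} {g : β → ℝ} {W W' c : Ω → ℝ} {C K : ℝ}
    (hc : StronglyMeasurable[m] c) (hcC : ∀ᵐ ω ∂μ, ‖c ω‖ ≤ C)
    (hW : AEStronglyMeasurable W μ) (hW' : AEStronglyMeasurable W' μ)
    (hWK : ∀ᵐ ω ∂μ, ‖W ω‖ ≤ K) (hW'K : ∀ᵐ ω ∂μ, ‖W' ω‖ ≤ K)
    (hg : Measurable g) (hgV : Integrable (fun ω => g (V ω)) μ)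
    (h : ∀ f : β → ℝ, Measurable f → (∃ C, ∀ y, |f y| ≤ C) →
      μ[fun ω => W ω * f (V ω) | m] =ᵐ[μ] fun ω => c ω * μ[fun ω => W' ω * f (V ω) | m] ω) :
    μ[fun ω => W ω * g (V ω) | m] =ᵐ[μ] fun ω => c ω * μ[fun ω => W' ω * g (V ω) | m] ω := by
  have hbound {U : Ω → ℝ} (hUK : ∀ᵐ ω ∂μ, ‖U ω‖ ≤ K) (n : ℕ) :
      ∀ᵐ ω ∂μ, ‖U ω * truncation g n (V ω)‖ ≤ |K| * ‖g (V ω)‖ := by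
    filter_upwards [hUK] with ω hω
    rw [norm_mul]
    exact mul_le_mul (hω.trans (le_abs_self K)) (abs_truncation_le_abs_self g n (V ω))
      (norm_nonneg _) (abs_nonneg K)
  refine condExp_ae_eq_mul_condExp_of_tendsto hm hc hcC
    (fun n => hW.mul (hgV.1.truncation (A := n))) (fun n => hW'.mul (hgV.1.truncation (A := n)))
    (hgV.norm.const_mul |K|) (hbound hWK) (hbound hW'K)
    (ae_of_all _ fun ω => (tendsto_truncation_natCast g (V ω)).const_mul (W ω))
    (ae_of_all _ fun ω => (tendsto_truncation_natCast g (V ω)).const_mul (W' ω))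
    fun n => h _ ((measurable_id.indicator measurableSet_Ioc).comp hg)
      ⟨|(n : ℝ)|, abs_truncation_le_bound g n⟩

theorem condExp_mul_comp_ae_eq_mul_condExp_comp_of_forall_bounded [IsFiniteMeasure μ]
    (hm : m ≤ m₀) {β : Type*} [MeasurableSpace β] {V : Ω → β} {g : β → ℝ} {W c : Ω → ℝ}
    {C : ℝ} (hc : StronglyMeasurable[m] c) (hcC : ∀ᵐ ω ∂μ, ‖c ω‖ ≤ C)
    (hW : AEStronglyMeasurable W μ) (hW1 : ∀ᵐ ω ∂μ, ‖W ω‖ ≤ 1)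
    (hg : Measurable g) (hgV : Integrable (fun ω => g (V ω)) μ)
    (h : ∀ f : β → ℝ, Measurable f → (∃ C, ∀ y, |f y| ≤ C) →
      μ[fun ω => W ω * f (V ω) | m] =ᵐ[μ] fun ω => c ω * μ[fun ω => f (V ω) | m] ω) :
    μ[fun ω => W ω * g (V ω) | m] =ᵐ[μ] fun ω => c ω * μ[fun ω => g (V ω) | m] ω := by
  simpa only [one_mul] using condExp_mul_comp_ae_eq_of_forall_bounded (W' := fun _ => 1) hm hc
    hcC hW aestronglyMeasurable_const hW1 (ae_of_all _ fun _ => norm_one.le) hg hgV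
    fun f hf hfC => by simpa only [one_mul] using h f hf hfC

theorem condExp_one_sub_mul_ae_eq {U F c : Ω → ℝ} (hF : Integrable F μ)
    (hUF : Integrable (U * F) μ) (h : μ[U * F | m] =ᵐ[μ] c * μ[F | m]) :
    μ[(1 - U) * F | m] =ᵐ[μ] (1 - c) * μ[F | m] := by
  rw [show (1 - U) * F = F - U * F by ring]
  filter_upwards [condExp_sub hF hUF m, h] with ω hsub hω
  simp only [Pi.sub_apply, Pi.mul_apply, Pi.one_apply] at hsub hω ⊢
  rw [hsub, hω]
  ring

theorem condExp_residual_ae_eq [IsFiniteMeasure μ] (hm : m ≤ m₀) {A G Y M p e : Ω → ℝ} {C : ℝ}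
    (hA : AEStronglyMeasurable A μ) (hA1 : ∀ᵐ ω ∂μ, ‖A ω‖ ≤ 1)
    (hG : AEStronglyMeasurable G μ) (hG1 : ∀ᵐ ω ∂μ, ‖G ω‖ ≤ 1) (hY : Integrable Y μ)
    (hM : StronglyMeasurable[m] M) (hMC : ∀ᵐ ω ∂μ, ‖M ω‖ ≤ C)
    (hGp : μ[G | m] =ᵐ[μ] p) (hAG : μ[A * G | m] =ᵐ[μ] e * μ[G | m])
    (hGY : μ[G * Y | m] =ᵐ[μ] p * μ[Y | m]) (hAGY : μ[A * (G * Y) | m] =ᵐ[μ] e * μ[G * Y | m]) :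
    μ[A * (G * (Y - M)) | m] =ᵐ[μ] e * p * (μ[Y | m] - M) := by
  have hAGi : Integrable (A * G) μ := ((integrable_const 1).mono' hG hG1).bdd_mul hA hA1
  have hAGYi : Integrable (A * (G * Y)) μ := (hY.bdd_mul hG hG1).bdd_mul hA hA1
  have hMAGi : Integrable (M * (A * G)) μ :=
    hAGi.bdd_mul (hM.mono hm).aestronglyMeasurable hMC
  rw [show A * (G * (Y - M)) = A * (G * Y) - M * (A * G) by ring]
  filter_upwards [condExp_sub hAGYi hMAGi m,
    condExp_stronglyMeasurable_mul_of_bound hm hM hAGi C hMC, hAGY, hGY, hAG, hGp]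
    with ω h₁ h₂ h₃ h₄ h₅ h₆
  simp only [Pi.sub_apply, Pi.mul_apply] at h₁ h₂ h₃ h₄ h₅ h₆ ⊢
  rw [h₁, h₂, h₃, h₄, h₅, h₆]
  ring

theorem integral_ipw_residual_add_eq [IsFiniteMeasure μ] (hm : m ≤ m₀) {A G Y M p e : Ω → ℝ}
    {C : ℝ} (hA : AEStronglyMeasurable A μ) (hA1 : ∀ᵐ ω ∂μ, ‖A ω‖ ≤ 1)
    (hG : AEStronglyMeasurable G μ) (hG1 : ∀ᵐ ω ∂μ, ‖G ω‖ ≤ 1) (hY : Integrable Y μ)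
    (hM : StronglyMeasurable[m] M) (hMC : ∀ᵐ ω ∂μ, ‖M ω‖ ≤ C)
    (hp : StronglyMeasurable[m] p) (he : StronglyMeasurable[m] e)
    (hpe : ∀ᵐ ω ∂μ, p ω ≠ 0 ∧ e ω ≠ 0)
    (hGp : μ[G | m] =ᵐ[μ] p) (hAG : μ[A * G | m] =ᵐ[μ] e * μ[G | m])
    (hGY : μ[G * Y | m] =ᵐ[μ] p * μ[Y | m]) (hAGY : μ[A * (G * Y) | m] =ᵐ[μ] e * μ[G * Y | m])
    (hint : Integrable ((1 - p) / (p * e) * (A * (G * (Y - M)))) μ) :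
    ∫ ω, ((1 - p) / (p * e) * (A * (G * (Y - M))) + M * (1 - G)) ω ∂μ
      = ∫ ω, ((1 - G) * Y) ω ∂μ := by
  have hw : StronglyMeasurable[m] ((1 - p) / (p * e)) :=
    ((hp.measurable.const_sub 1).div (hp.measurable.mul he.measurable)).stronglyMeasurable
  have hMμ : AEStronglyMeasurable M μ := (hM.mono hm).aestronglyMeasurable
  have hGi : Integrable G μ := (integrable_const 1).mono' hG hG1
  have h1i : Integrable (1 : Ω → ℝ) μ := integrable_const 1
  have hG'i : Integrable (1 - G) μ := h1i.sub hGi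
  have hMG'i : Integrable (M * (1 - G)) μ := hG'i.bdd_mul hMμ hMC
  have hψi : Integrable (A * (G * (Y - M))) μ :=
    ((hY.sub ((integrable_const C).mono' hMμ hMC)).bdd_mul hG hG1).bdd_mul hA hA1
  have hG'c : μ[1 - G | m] =ᵐ[μ] 1 - p := by
    have h1c : μ[(1 : Ω → ℝ) | m] = 1 := condExp_const hm 1
    filter_upwards [condExp_sub h1i hGi m, hGp] with ω h₁ h₂
    rw [h₁, Pi.sub_apply, Pi.sub_apply, h₂, h1c]
  have hL : μ[(1 - p) / (p * e) * (A * (G * (Y - M))) + M * (1 - G) | m]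
      =ᵐ[μ] (1 - p) * μ[Y | m] := by
    filter_upwards [condExp_add hint hMG'i m,
      condExp_mul_of_stronglyMeasurable_left hw hint hψi,
      condExp_stronglyMeasurable_mul_of_bound hm hM hG'i C hMC,
      condExp_residual_ae_eq hm hA hA1 hG hG1 hY hM hMC hGp hAG hGY hAGY, hG'c, hpe]
      with ω h₁ h₂ h₃ h₄ h₅ h₆
    simp only [Pi.add_apply, Pi.sub_apply, Pi.mul_apply, Pi.div_apply, Pi.one_apply]
      at h₁ h₂ h₃ h₄ h₅ ⊢
    rw [h₁, h₂, h₃, h₄, h₅]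
    field_simp [h₆.1, h₆.2]
    ring
  calc _ = ∫ ω, (μ[(1 - p) / (p * e) * (A * (G * (Y - M))) + M * (1 - G) | m]) ω ∂μ :=
        (integral_condExp hm).symm
    _ = ∫ ω, (μ[(1 - G) * Y | m]) ω ∂μ :=
      integral_congr_ae (hL.trans (condExp_one_sub_mul_ae_eq hY (hY.bdd_mul hG hG1) hGY).symm)
    _ = _ := integral_condExp hm

noncomputable def aipwScore (G A Y p e M₀ M₁ : Ω → ℝ) : Ω → ℝ :=
  G * ((1 - p) / p) * (A * (Y - M₁) / e - (1 - A) * (Y - M₀) / (1 - e)) + (1 - G) * (M₁ - M₀)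

theorem aipwScore_eq {A G Y Y₀ Y₁ M₀ M₁ p e : Ω → ℝ} (hAbin : ∀ ω, A ω = 0 ∨ A ω = 1)
    (hY : ∀ ω, Y ω = A ω * Y₁ ω + (1 - A ω) * Y₀ ω) :
    aipwScore G A Y p e M₀ M₁ =
      ((1 - p) / (p * e) * (A * (G * (Y₁ - M₁))) + M₁ * (1 - G))
        - ((1 - p) / (p * (1 - e)) * ((1 - A) * (G * (Y₀ - M₀))) + M₀ * (1 - G)) := by
  ext ω
  rcases hAbin ω with h | h <;>
    simp only [aipwScore, Pi.add_apply, Pi.sub_apply, Pi.mul_apply, Pi.one_apply,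
      div_eq_mul_inv, mul_inv, hY ω, h] <;> ring

theorem integrable_and_integrable_of_integrable_sub {A T₁ T₀ : Ω → ℝ}
    (hA : AEStronglyMeasurable A μ) (hAbin : ∀ ω, A ω = 0 ∨ A ω = 1)
    (hT₁ : ∀ ω, A ω = 0 → T₁ ω = 0) (hT₀ : ∀ ω, A ω = 1 → T₀ ω = 0)
    (h : Integrable (T₁ - T₀) μ) : Integrable T₁ μ ∧ Integrable T₀ μ := by
  have hA1 : ∀ᵐ ω ∂μ, ‖A ω‖ ≤ 1 := ae_of_all _ fun ω => by rcases hAbin ω with h | h <;> simp [h]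
  have hA'1 : ∀ᵐ ω ∂μ, ‖(A - 1) ω‖ ≤ 1 :=
    ae_of_all _ fun ω => by rcases hAbin ω with h | h <;> simp [h]
  have h₁ : A * (T₁ - T₀) = T₁ := by
    ext ω; rcases hAbin ω with h | h <;> simp [h, hT₁ ω, hT₀ ω]
  have h₀ : (A - 1) * (T₁ - T₀) = T₀ := by
    ext ω; rcases hAbin ω with h | h <;> simp [h, hT₁ ω, hT₀ ω]
  exact ⟨h₁ ▸ h.bdd_mul hA hA1, h₀ ▸ h.bdd_mul (hA.sub aestronglyMeasurable_const) hA'1⟩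

theorem integral_aipwScore_eq [IsFiniteMeasure μ] (hm : m ≤ m₀)
    {A G Y Y₀ Y₁ M₀ M₁ p e : Ω → ℝ} {C₀ C₁ : ℝ}
    (hA : AEStronglyMeasurable A μ) (hAbin : ∀ ω, A ω = 0 ∨ A ω = 1)
    (hG : AEStronglyMeasurable G μ) (hG1 : ∀ᵐ ω ∂μ, ‖G ω‖ ≤ 1)
    (hY : ∀ ω, Y ω = A ω * Y₁ ω + (1 - A ω) * Y₀ ω)
    (hY₀ : Integrable Y₀ μ) (hY₁ : Integrable Y₁ μ)
    (hM₀ : StronglyMeasurable[m] M₀) (hM₀C : ∀ᵐ ω ∂μ, ‖M₀ ω‖ ≤ C₀)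
    (hM₁ : StronglyMeasurable[m] M₁) (hM₁C : ∀ᵐ ω ∂μ, ‖M₁ ω‖ ≤ C₁)
    (hp : StronglyMeasurable[m] p) (he : StronglyMeasurable[m] e)
    (hpe : ∀ᵐ ω ∂μ, p ω ≠ 0 ∧ e ω ≠ 0 ∧ e ω ≠ 1)
    (hGp : μ[G | m] =ᵐ[μ] p) (hAG : μ[A * G | m] =ᵐ[μ] e * p)
    (hGY₀ : μ[G * Y₀ | m] =ᵐ[μ] p * μ[Y₀ | m]) (hGY₁ : μ[G * Y₁ | m] =ᵐ[μ] p * μ[Y₁ | m])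
    (hGAY₀ : μ[G * A * Y₀ | m] =ᵐ[μ] e * μ[G * Y₀ | m])
    (hGAY₁ : μ[G * A * Y₁ | m] =ᵐ[μ] e * μ[G * Y₁ | m])
    (hint : Integrable (aipwScore G A Y p e M₀ M₁) μ) :
    ∫ ω, aipwScore G A Y p e M₀ M₁ ω ∂μ = ∫ ω, ((1 - G) * (Y₁ - Y₀)) ω ∂μ := by
  rw [aipwScore_eq hAbin hY] at hint ⊢
  set T₁ := (1 - p) / (p * e) * (A * (G * (Y₁ - M₁)))
  set T₀ := (1 - p) / (p * (1 - e)) * ((1 - A) * (G * (Y₀ - M₀)))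
  have hGi : Integrable G μ := (integrable_const 1).mono' hG hG1
  have hGYi {Z : Ω → ℝ} (hZ : Integrable Z μ) : Integrable (G * Z) μ := hZ.bdd_mul hG hG1
  have hG'Yi {Z : Ω → ℝ} (hZ : Integrable Z μ) : Integrable ((1 - G) * Z) μ :=
    one_sub_mul G Z ▸ hZ.sub (hGYi hZ)
  have hMG'i {M : Ω → ℝ} {C : ℝ} (hM : StronglyMeasurable[m] M) (hMC : ∀ᵐ ω ∂μ, ‖M ω‖ ≤ C) :
      Integrable (M * (1 - G)) μ :=
    ((integrable_const 1).sub hGi).bdd_mul (hM.mono hm).aestronglyMeasurable hMC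
  obtain ⟨hT₁i, hT₀i⟩ := integrable_and_integrable_of_integrable_sub hA hAbin
    (fun ω h => by simp [T₁, h]) (fun ω h => by simp [T₀, h])
    (show T₁ - T₀ = T₁ + M₁ * (1 - G) - (T₀ + M₀ * (1 - G)) - (M₁ * (1 - G) - M₀ * (1 - G))
      by ring ▸ hint.sub ((hMG'i hM₁ hM₁C).sub (hMG'i hM₀ hM₀C)))
  have hAG' : μ[A * G | m] =ᵐ[μ] e * μ[G | m] := by
    filter_upwards [hAG, hGp] with ω h₁ h₂
    simp only [Pi.mul_apply] at h₁ ⊢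
    rw [h₁, h₂]
  have hAGY₀ : μ[A * (G * Y₀) | m] =ᵐ[μ] e * μ[G * Y₀ | m] := by
    rwa [show A * (G * Y₀) = G * A * Y₀ by ring]
  have hAGY₁ : μ[A * (G * Y₁) | m] =ᵐ[μ] e * μ[G * Y₁ | m] := by
    rwa [show A * (G * Y₁) = G * A * Y₁ by ring]
  have hA1 : ∀ᵐ ω ∂μ, ‖A ω‖ ≤ 1 := ae_of_all _ fun ω => by rcases hAbin ω with h | h <;> simp [h]
  have harm₁ : ∫ ω, (T₁ + M₁ * (1 - G)) ω ∂μ = ∫ ω, ((1 - G) * Y₁) ω ∂μ :=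
    integral_ipw_residual_add_eq hm hA hA1 hG hG1 hY₁ hM₁ hM₁C hp he
      (hpe.mono fun _ h => ⟨h.1, h.2.1⟩) hGp hAG' hGY₁ hAGY₁ hT₁i
  have harm₀ : ∫ ω, (T₀ + M₀ * (1 - G)) ω ∂μ = ∫ ω, ((1 - G) * Y₀) ω ∂μ :=
    integral_ipw_residual_add_eq hm (aestronglyMeasurable_const.sub hA)
      (ae_of_all _ fun ω => by rcases hAbin ω with h | h <;> simp [h]) hG hG1 hY₀ hM₀ hM₀C hp
      (stronglyMeasurable_const.sub he) (hpe.mono fun _ h => ⟨h.1, sub_ne_zero.2 h.2.2.symm⟩)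
      hGp (condExp_one_sub_mul_ae_eq hGi (hGi.bdd_mul hA hA1) hAG') hGY₀
      (condExp_one_sub_mul_ae_eq (hGYi hY₀) ((hGYi hY₀).bdd_mul hA hA1) hAGY₀) hT₀i
  calc ∫ ω, (T₁ + M₁ * (1 - G) - (T₀ + M₀ * (1 - G))) ω ∂μ
      = ∫ ω, (T₁ + M₁ * (1 - G)) ω ∂μ - ∫ ω, (T₀ + M₀ * (1 - G)) ω ∂μ :=
        integral_sub (hT₁i.add (hMG'i hM₁ hM₁C)) (hT₀i.add (hMG'i hM₀ hM₀C))
    _ = ∫ ω, ((1 - G) * Y₁) ω ∂μ - ∫ ω, ((1 - G) * Y₀) ω ∂μ := by rw [harm₁, harm₀]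
    _ = ∫ ω, ((1 - G) * (Y₁ - Y₀)) ω ∂μ := by
        rw [mul_sub]
        exact (integral_sub (hG'Yi hY₁) (hG'Yi hY₀)).symm

end

theorem double_robustness_outcome_side_general
    {Ω : Type*} [MeasurableSpace Ω] (P : Measure Ω) [IsProbabilityMeasure P]
    (X A G Y0 Y1 Y : Ω → ℝ)
    (hX : Measurable X) (hA : Measurable A) (hG : Measurable G)
    (hY0 : Integrable Y0 P) (hY1 : Integrable Y1 P)
    (hAbin : ∀ ω, A ω = 0 ∨ A ω = 1) (hGbin : ∀ ω, G ω = 0 ∨ G ω = 1)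
    (hcons : ∀ ω, Y ω = A ω * Y1 ω + (1 - A ω) * Y0 ω)
    (e1 π : ℝ → ℝ)
    (he1m : Measurable e1) (hπm : Measurable π)
    (hπ : (fun ω => π (X ω)) =ᵐ[P] P[G | mX X])
    (he1 : (fun ω => e1 (X ω) * π (X ω)) =ᵐ[P] P[fun ω => A ω * G ω | mX X])
    (hpose : ∀ᵐ ω ∂P, 0 < e1 (X ω) ∧ e1 (X ω) < 1)
    (hposπ : ∀ᵐ ω ∂P, 0 < π (X ω) ∧ π (X ω) < 1)
    (hunconf : ∀ f : ℝ × ℝ → ℝ, Measurable f → (∃ C, ∀ p, |f p| ≤ C) →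
      P[fun ω => G ω * A ω * f (Y0 ω, Y1 ω) | mX X]
        =ᵐ[P] fun ω => e1 (X ω) * (P[fun ω => G ω * f (Y0 ω, Y1 ω) | mX X]) ω)
    (htrans : ∀ f : ℝ × ℝ → ℝ, Measurable f → (∃ C, ∀ p, |f p| ≤ C) →
      P[fun ω => G ω * f (Y0 ω, Y1 ω) | mX X]
        =ᵐ[P] fun ω => π (X ω) * (P[fun ω => f (Y0 ω, Y1 ω) | mX X]) ω)
    (q τ : ℝ)
    (hq1 : q < 1)
    (hτ : τ = (∫ ω, (1 - G ω) * (Y1 ω - Y0 ω) ∂P) / (1 - q))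
    (m0f m1f : ℝ → ℝ) (hm0f : Measurable m0f) (hm1f : Measurable m1f)
    (hm0b : ∃ C, ∀ x, |m0f x| ≤ C) (hm1b : ∃ C, ∀ x, |m1f x| ≤ C)
    (φ : Ω → ℝ)
    (hφ : ∀ ω, φ ω =
      G ω / (1 - q) * ((1 - π (X ω)) / π (X ω)) *
        (A ω * (Y ω - m1f (X ω)) / e1 (X ω)
          - (1 - A ω) * (Y ω - m0f (X ω)) / (1 - e1 (X ω)))
      + (1 - G ω) / (1 - q) * (m1f (X ω) - m0f (X ω)))
    (hφint : Integrable φ P) :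
    ∫ ω, φ ω ∂P = τ := by
  have hm : mX X ≤ ‹MeasurableSpace Ω› := hX.comap_le
  have hmeas {f : ℝ → ℝ} (hf : Measurable f) : StronglyMeasurable[mX X] fun ω => f (X ω) :=
    (hf.comp (comap_measurable X)).stronglyMeasurable
  have hunit {f : ℝ → ℝ} (h : ∀ᵐ ω ∂P, 0 < f (X ω) ∧ f (X ω) < 1) : ∀ᵐ ω ∂P, ‖f (X ω)‖ ≤ 1 :=
    h.mono fun ω h => by rw [Real.norm_eq_abs, abs_le]; constructor <;> linarith
  have hG1 : ∀ᵐ ω ∂P, ‖G ω‖ ≤ 1 := ae_of_all _ fun ω => by rcases hGbin ω with h | h <;> simp [h]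
  have hGY {g : ℝ × ℝ → ℝ} (hg : Measurable g) (hgi : Integrable (fun ω => g (Y0 ω, Y1 ω)) P) :=
    condExp_mul_comp_ae_eq_mul_condExp_comp_of_forall_bounded hm (hmeas hπm) (hunit hposπ)
      hG.aestronglyMeasurable hG1 hg hgi htrans
  have hGAY {g : ℝ × ℝ → ℝ} (hg : Measurable g) (hgi : Integrable (fun ω => g (Y0 ω, Y1 ω)) P) :=
    condExp_mul_comp_ae_eq_of_forall_bounded hm (hmeas he1m) (hunit hpose)
      (hG.mul hA).aestronglyMeasurable hG.aestronglyMeasurable (ae_of_all _ fun ω => by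
        rcases hGbin ω with h | h <;> rcases hAbin ω with h' | h' <;> simp [h, h']) hG1 hg hgi
      hunconf
  obtain ⟨C₀, hC₀⟩ := hm0b
  obtain ⟨C₁, hC₁⟩ := hm1b
  have hscore : φ = (1 - q)⁻¹ • aipwScore G A Y (fun ω => π (X ω)) (fun ω => e1 (X ω))
      (fun ω => m0f (X ω)) (fun ω => m1f (X ω)) := by
    ext ω
    simp only [hφ ω, aipwScore, Pi.smul_apply, smul_eq_mul, Pi.add_apply, Pi.sub_apply,
      Pi.mul_apply, Pi.div_apply, Pi.one_apply]
    ring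
  have hint := (integrable_smul_iff (inv_ne_zero (sub_ne_zero.2 hq1.ne')) _).1 (hscore ▸ hφint)
  simp only [hscore, Pi.smul_apply, smul_eq_mul, integral_const_mul]
  rw [integral_aipwScore_eq hm hA.aestronglyMeasurable hAbin
    hG.aestronglyMeasurable hG1 hcons hY0 hY1 (hmeas hm0f) (ae_of_all _ fun ω => hC₀ (X ω))
    (hmeas hm1f) (ae_of_all _ fun ω => hC₁ (X ω)) (hmeas hπm) (hmeas he1m)
    (hpose.and hposπ |>.mono fun _ h => ⟨h.2.1.ne', h.1.1.ne', h.1.2.ne⟩) hπ.symm he1.symm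
    (hGY measurable_fst hY0) (hGY measurable_snd hY1) (hGAY measurable_fst hY0)
    (hGAY measurable_snd hY1) hint, hτ, inv_mul_eq_div]
  rfl

theorem double_robustness_outcome_side
    {Ω : Type*} [MeasurableSpace Ω] (P : Measure Ω) [IsProbabilityMeasure P]
    (X A G Y0 Y1 Y : Ω → ℝ)
    (hX : Measurable X) (hA : Measurable A) (hG : Measurable G)
    (hY0m : Measurable Y0) (hY1m : Measurable Y1)
    (hY0 : Integrable Y0 P) (hY1 : Integrable Y1 P)
    (hAbin : ∀ ω, A ω = 0 ∨ A ω = 1) (hGbin : ∀ ω, G ω = 0 ∨ G ω = 1)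
    (hcons : ∀ ω, Y ω = A ω * Y1 ω + (1 - A ω) * Y0 ω)
    (e1 π μ0 μ1 : ℝ → ℝ)
    (he1m : Measurable e1) (hπm : Measurable π)
    (hμ0m : Measurable μ0) (hμ1m : Measurable μ1)
    (hπ : (fun ω => π (X ω)) =ᵐ[P] P[G | mX X])
    (he1 : (fun ω => e1 (X ω) * π (X ω)) =ᵐ[P] P[fun ω => A ω * G ω | mX X])
    (hpose : ∀ᵐ ω ∂P, 0 < e1 (X ω) ∧ e1 (X ω) < 1)
    (hposπ : ∀ᵐ ω ∂P, 0 < π (X ω) ∧ π (X ω) < 1)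
    (hunconf : ∀ f : ℝ × ℝ → ℝ, Measurable f → (∃ C, ∀ p, |f p| ≤ C) →
      P[fun ω => G ω * A ω * f (Y0 ω, Y1 ω) | mX X]
        =ᵐ[P] fun ω => e1 (X ω) * (P[fun ω => G ω * f (Y0 ω, Y1 ω) | mX X]) ω)
    (htrans : ∀ f : ℝ × ℝ → ℝ, Measurable f → (∃ C, ∀ p, |f p| ≤ C) →
      P[fun ω => G ω * f (Y0 ω, Y1 ω) | mX X]
        =ᵐ[P] fun ω => π (X ω) * (P[fun ω => f (Y0 ω, Y1 ω) | mX X]) ω)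
    (hμ1 : (fun ω => μ1 (X ω) * e1 (X ω) * π (X ω)) =ᵐ[P]
      P[fun ω => A ω * G ω * Y ω | mX X])
    (hμ0 : (fun ω => μ0 (X ω) * (1 - e1 (X ω)) * π (X ω)) =ᵐ[P]
      P[fun ω => (1 - A ω) * G ω * Y ω | mX X])
    (q τ : ℝ)
    (hq : q = (P {ω | G ω = 1}).toReal) (hq0 : 0 < q) (hq1 : q < 1)
    (hτ : τ = (∫ ω, (1 - G ω) * (Y1 ω - Y0 ω) ∂P) / (1 - q))
    (m0f m1f : ℝ → ℝ) (hm0f : Measurable m0f) (hm1f : Measurable m1f)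
    (hm0b : ∃ C, ∀ x, |m0f x| ≤ C) (hm1b : ∃ C, ∀ x, |m1f x| ≤ C)
    (φ : Ω → ℝ)
    (hφ : ∀ ω, φ ω =
      G ω / (1 - q) * ((1 - π (X ω)) / π (X ω)) *
        (A ω * (Y ω - m1f (X ω)) / e1 (X ω)
          - (1 - A ω) * (Y ω - m0f (X ω)) / (1 - e1 (X ω)))
      + (1 - G ω) / (1 - q) * (m1f (X ω) - m0f (X ω)))
    (hφint : Integrable φ P) :
    ∫ ω, φ ω ∂P = τ :=
  double_robustness_outcome_side_general P X A G Y0 Y1 Y hX hA hG hY0 hY1 hAbin hGbin hcons e1 π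
    he1m hπm hπ he1 hpose hposπ hunconf htrans q τ hq1 hτ m0f m1f hm0f hm1f hm0b hm1b φ hφ hφint
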